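/- Let n, t ∈ ℕ with n > t, and let s be an integer with 1 ≤ s ≤ m_n − 1. Suppose x ∈ G_m satisfies x ∈ I_t \ I_{t+1} (that is, x_0 = … = x_{t−1} = 0 and x_t ≠ 0) and the element x − x_t·e_t (obtained from x by replacing its t-th coordinate with 0) does not belong to I_n (that is, x_j ≠ 0 for some j with t < j < n). Then K_{s·M_n}(x) = 0. -/

import Mathlib

open Finset
open scoped ENNReal NNReal

noncomputable section

namespace Vilenkin

/-- The generalized powers `M_0 = 1`, `M_{k+1} = m_k M_k`. -/
def M (m : ℕ → ℕ) : ℕ → ℕ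
  | 0 => 1
  | k + 1 => m k * M m k

/-- The `j`-th digit of `n` in the mixed-radix system determined by `m`. -/
def digit (m : ℕ → ℕ) (n j : ℕ) : ℕ := (n / M m j) % m j

/-- The Vilenkin group `G_m`, the complete direct product of the cyclic groups `Z_{m_k}`. -/
abbrev G (m : ℕ → ℕ) : Type := ∀ k : ℕ, ZMod (m k)

instance (n : ℕ) : MeasurableSpace (ZMod n) := ⊤

/-- The generalized Rademacher functions `r_k(x) = exp(2 π i x_k / m_k)`. -/
def rad (m : ℕ → ℕ) (k : ℕ) (x : G m) : ℂ :=
  Complex.exp (2 * Real.pi * Complex.I * ((x k).val : ℂ) / (m k : ℂ))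

/-- The Vilenkin system `ψ_n = ∏_k r_k^{n_k}` (the product is finite). -/
def psi (m : ℕ → ℕ) (n : ℕ) (x : G m) : ℂ :=
  ∏ j ∈ Finset.range (n + 1), rad m j x ^ digit m n j

/-- The Dirichlet kernels `D_n = ∑_{k=0}^{n-1} ψ_k`. -/
def D (m : ℕ → ℕ) (n : ℕ) (x : G m) : ℂ :=
  ∑ k ∈ Finset.range n, psi m k x

/-- The Fejér kernels `K_n = (1/n) ∑_{k=0}^{n-1} D_k`. -/
def K (m : ℕ → ℕ) (n : ℕ) (x : G m) : ℂ :=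
  (n : ℂ)⁻¹ * ∑ k ∈ Finset.range n, D m k x

/-- The cylinder `I_n(x) = {y : y_j = x_j for j < n}`. -/
def cyl (m : ℕ → ℕ) (n : ℕ) (x : G m) : Set (G m) := {y | ∀ j < n, y j = x j}

/-- The element `e_n` with `n`-th coordinate `1` and all other coordinates `0`. -/
def e (m : ℕ → ℕ) (n : ℕ) : G m := fun k => if k = n then 1 else 0

/-!
Write `L = s M_n`; then `L K_L = (L - 1) D_L - ∑_{i<L} i ψ_i`. Splitting `j < s M_n` as
`j = a M_n + k` with `a < s`, `k < M_n` gives `ψ_j = r_n^a ψ_k`, so `D_L` and the moment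
`∑_{i<L} i ψ_i` are combinations of `D_{M_n}` and `∑_{k<M_n} k ψ_k`. Iterating the splitting,
`D_{M_n} = ∏_{j<n} ∑_{a<m_j} r_j^a`, which vanishes because `r_t(x)` is an `m_t`-th root of unity
other than `1`. The moment vanishes by the same splitting at level `u`, the second nonzero
coordinate of `x` below `n`: there both `D_{M_u}` and the geometric sum of `r_u(x)` are zero.
-/

variable {m : ℕ → ℕ}

lemma M_pos (hm : ∀ k, 0 < m k) (n : ℕ) : 0 < M m n := by
  induction n with
  | zero => exact Nat.one_pos
  | succ k ih => exact Nat.mul_pos (hm k) ih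

lemma lt_M_self (hm : ∀ k, 2 ≤ m k) (n : ℕ) : n < M m n := by
  induction n with
  | zero => exact Nat.one_pos
  | succ k ih =>
    show k + 1 < m k * M m k
    nlinarith [hm k]

lemma M_dvd_M (m : ℕ → ℕ) {i n : ℕ} (h : i ≤ n) : M m i ∣ M m n := by
  induction n, h using Nat.le_induction with
  | base => exact dvd_rfl
  | succ n _ ih => exact ih.mul_left (m n)

lemma M_le_M (hm : ∀ k, 0 < m k) {i n : ℕ} (h : i ≤ n) : M m i ≤ M m n :=
  Nat.le_of_dvd (M_pos hm n) (M_dvd_M m h)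

lemma digit_eq_zero_of_lt_M (m : ℕ → ℕ) {k j : ℕ} (h : k < M m j) : digit m k j = 0 := by
  simp [digit, Nat.div_eq_of_lt h]

lemma add_mul_M_lt_M_succ {N a k : ℕ} (ha : a < m N) (hk : k < M m N) :
    a * M m N + k < M m (N + 1) :=
  calc a * M m N + k < (a + 1) * M m N := by rw [Nat.succ_mul]; omega
    _ ≤ m N * M m N := Nat.mul_le_mul_right _ ha

lemma digit_mul_M_add_of_lt (hm : ∀ k, 0 < m k) {N a k j : ℕ} (hj : j < N) :
    digit m (a * M m N + k) j = digit m k j := by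
  obtain ⟨c, hc⟩ := M_dvd_M m (show j + 1 ≤ N from hj)
  have hsplit : a * M m N + k = k + a * c * m j * M m j := by
    rw [hc]; show a * (m j * M m j * c) + k = _; ring
  rw [digit, hsplit, Nat.add_mul_div_right _ _ (M_pos hm j), Nat.add_mul_mod_self_right, digit]

lemma digit_mul_M_add_self (hm : ∀ k, 0 < m k) {N a k : ℕ} (ha : a < m N) (hk : k < M m N) :
    digit m (a * M m N + k) N = a := by
  rw [digit, mul_comm a, Nat.mul_add_div (M_pos hm N), Nat.div_eq_of_lt hk, add_zero,
    Nat.mod_eq_of_lt ha]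

lemma psi_eq_prod_range (hm : ∀ k, 2 ≤ m k) {n N : ℕ} (hN : n < M m N) (x : G m) :
    psi m n x = ∏ j ∈ range N, rad m j x ^ digit m n j := by
  have hm₀ : ∀ k, 0 < m k := fun k => by have := hm k; omega
  have hdigit : ∀ j, n < j ∨ N ≤ j → digit m n j = 0 := by
    rintro j (hj | hj)
    · exact digit_eq_zero_of_lt_M m (hj.trans (lt_M_self hm j))
    · exact digit_eq_zero_of_lt_M m (hN.trans_le (M_le_M hm₀ hj))
  rw [psi]
  rcases le_total (n + 1) N with h | h
  · refine prod_subset (range_subset_range.2 h) fun j _ hj => ?_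
    rw [hdigit j (.inl (by simpa using hj)), pow_zero]
  · refine (prod_subset (range_subset_range.2 h) fun j _ hj => ?_).symm
    rw [hdigit j (.inr (by simpa using hj)), pow_zero]

lemma psi_mul_M_add (hm : ∀ k, 2 ≤ m k) {N a k : ℕ} (ha : a < m N) (hk : k < M m N) (x : G m) :
    psi m (a * M m N + k) x = rad m N x ^ a * psi m k x := by
  have hm₀ : ∀ k, 0 < m k := fun k => by have := hm k; omega
  rw [psi_eq_prod_range hm (add_mul_M_lt_M_succ ha hk) x, psi_eq_prod_range hm hk x,
    prod_range_succ, digit_mul_M_add_self hm₀ ha hk, mul_comm]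
  congr 1
  exact prod_congr rfl fun j hj => by rw [digit_mul_M_add_of_lt hm₀ (mem_range.mp hj)]

lemma sum_range_mul_eq_sum_sum {β : Type*} [AddCommMonoid β] (f : ℕ → β) (s L : ℕ) :
    ∑ j ∈ range (s * L), f j = ∑ a ∈ range s, ∑ k ∈ range L, f (a * L + k) := by
  induction s with
  | zero => simp
  | succ s ih => rw [Nat.succ_mul, sum_range_add, ih, sum_range_succ]

lemma sum_weighted_psi_range_mul_M (hm : ∀ k, 2 ≤ m k) {s n : ℕ} (hs : s ≤ m n) (g : ℕ → ℂ)
    (x : G m) :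
    ∑ j ∈ range (s * M m n), g j * psi m j x
      = ∑ a ∈ range s, ∑ k ∈ range (M m n), g (a * M m n + k) * (rad m n x ^ a * psi m k x) := by
  rw [sum_range_mul_eq_sum_sum]
  refine sum_congr rfl fun a ha => sum_congr rfl fun k hk => ?_
  rw [psi_mul_M_add hm ((mem_range.mp ha).trans_le hs) (mem_range.mp hk)]

lemma D_mul_M (hm : ∀ k, 2 ≤ m k) {s n : ℕ} (hs : s ≤ m n) (x : G m) :
    D m (s * M m n) x = (∑ a ∈ range s, rad m n x ^ a) * D m (M m n) x := by
  have h := sum_weighted_psi_range_mul_M hm hs 1 x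
  simp only [Pi.one_apply, one_mul] at h
  rw [D, h, D, sum_mul]
  simp only [mul_sum]

lemma sum_cast_mul_psi_range_mul_M (hm : ∀ k, 2 ≤ m k) {s n : ℕ} (hs : s ≤ m n) (x : G m) :
    ∑ j ∈ range (s * M m n), (j : ℂ) * psi m j x
      = (M m n : ℂ) * (∑ a ∈ range s, (a : ℂ) * rad m n x ^ a) * D m (M m n) x
        + (∑ a ∈ range s, rad m n x ^ a) * ∑ k ∈ range (M m n), (k : ℂ) * psi m k x := by
  rw [sum_weighted_psi_range_mul_M hm hs Nat.cast x, D, mul_assoc, sum_mul_sum, sum_mul_sum, mul_sum, ← sum_add_distrib]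
  refine sum_congr rfl fun a _ => ?_
  rw [mul_sum, ← sum_add_distrib]
  refine sum_congr rfl fun k _ => ?_
  push_cast
  ring

lemma sum_range_rad_pow_eq_zero (hm : ∀ k, 2 ≤ m k) {q : ℕ} {x : G m} (hx : x q ≠ 0) :
    ∑ a ∈ range (m q), rad m q x ^ a = 0 := by
  have hmq : m q ≠ 0 := by have := hm q; omega
  have : NeZero (m q) := ⟨hmq⟩
  have hζ := Complex.isPrimitiveRoot_exp (m q) hmq
  have hrad : rad m q x = Complex.exp (2 * Real.pi * Complex.I / m q) ^ (x q).val := by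
    rw [rad, ← Complex.exp_nat_mul]
    ring_nf
  have hne : rad m q x ≠ 1 := by
    rw [hrad, Ne, hζ.pow_eq_one_iff_dvd]
    exact Nat.not_dvd_of_pos_of_lt ((ZMod.val_pos).mpr hx) (ZMod.val_lt _)
  have hpow : rad m q x ^ m q = 1 := by
    rw [hrad, pow_right_comm, hζ.pow_eq_one, one_pow]
  rw [geom_sum_eq hne, hpow, sub_self, zero_div]

lemma D_M_eq_prod (hm : ∀ k, 2 ≤ m k) (x : G m) (N : ℕ) :
    D m (M m N) x = ∏ j ∈ range N, ∑ a ∈ range (m j), rad m j x ^ a := by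
  induction N with
  | zero => simp [D, M, psi, digit]
  | succ N ih =>
    rw [show M m (N + 1) = m N * M m N from rfl, D_mul_M hm le_rfl, ih, prod_range_succ, mul_comm]

lemma D_M_eq_zero (hm : ∀ k, 2 ≤ m k) {x : G m} {N q : ℕ} (hq : q < N) (hx : x q ≠ 0) :
    D m (M m N) x = 0 := by
  rw [D_M_eq_prod hm x N]
  exact prod_eq_zero (mem_range.mpr hq) (sum_range_rad_pow_eq_zero hm hx)

lemma sum_cast_mul_psi_range_M_eq_zero (hm : ∀ k, 2 ≤ m k) {x : G m} {t u : ℕ} (htu : t < u)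
    (ht : x t ≠ 0) (hu : x u ≠ 0) {N : ℕ} (huN : u < N) :
    ∑ k ∈ range (M m N), (k : ℂ) * psi m k x = 0 := by
  induction N, huN using Nat.le_induction with
  | base =>
    rw [show M m (u + 1) = m u * M m u from rfl, sum_cast_mul_psi_range_mul_M hm le_rfl,
      D_M_eq_zero hm htu ht, sum_range_rad_pow_eq_zero hm hu]
    ring
  | succ N huN ih =>
    rw [show M m (N + 1) = m N * M m N from rfl, sum_cast_mul_psi_range_mul_M hm le_rfl, ih,
      D_M_eq_zero hm (htu.trans huN) ht]
    ring

lemma sum_range_D (x : G m) (L : ℕ) :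
    ∑ k ∈ range L, D m k x = ((L : ℂ) - 1) * D m L x - ∑ i ∈ range L, (i : ℂ) * psi m i x := by
  induction L with
  | zero => simp [D]
  | succ L ih =>
    rw [sum_range_succ, ih, D, D, sum_range_succ, sum_range_succ]
    push_cast
    ring

theorem statement6_general (m : ℕ → ℕ) (hm : ∀ k, 2 ≤ m k) (n t : ℕ) (hnt : t < n)
    (s : ℕ) (hs2 : s ≤ m n - 1) (x : G m)
    (hx2 : x t ≠ 0)
    (hx3 : ∃ j, t < j ∧ j < n ∧ x j ≠ 0) :
    K m (s * M m n) x = 0 := by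
  obtain ⟨u, htu, hun, hu⟩ := hx3
  have hs : s ≤ m n := by omega
  have hD : D m (M m n) x = 0 := D_M_eq_zero hm hnt hx2
  have hmoment : ∑ k ∈ range (M m n), (k : ℂ) * psi m k x = 0 :=
    sum_cast_mul_psi_range_M_eq_zero hm htu hx2 hu hun
  rw [K, sum_range_D, D_mul_M hm hs, sum_cast_mul_psi_range_mul_M hm hs, hD, hmoment]
  ring

/-- vanishing of the Fejér kernel `K_{s M_n}` off suitable cylinders. -/
theorem statement6 (m : ℕ → ℕ) (hm : ∀ k, 2 ≤ m k) (n t : ℕ) (hnt : t < n)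
    (s : ℕ) (hs1 : 1 ≤ s) (hs2 : s ≤ m n - 1) (x : G m)
    (hx1 : ∀ j < t, x j = 0) (hx2 : x t ≠ 0)
    (hx3 : ∃ j, t < j ∧ j < n ∧ x j ≠ 0) :
    K m (s * M m n) x = 0 :=
  statement6_general m hm n t hnt s hs2 x hx2 hx3

end Vilenkin

end
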